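/- Let G be a finite simple graph and d ≥ 1 an integer. Let C and D be disjoint cliques of G such that C has size 1 or size at least 2d+1, D has size at least 2d+1, and some vertex u ∈ C has more than d neighbors in D. Let G₁ be the graph obtained from G by adding all edges between C and D. Then: (a) for every d-cut (A, B) of G, either C ∪ D ⊆ A or C ∪ D ⊆ B; and (b) a set of edges F ⊆ E(G) is the edge cut of a d-cut of G if and only if F is the edge cut of a d-cut of G₁. -/

import Mathlib

variable {V : Type*}

/-- A `d`-cut of a simple graph `G`: a partition `(A, B)` of the vertex set into two
nonempty parts such that every vertex of `A` has at most `d` neighbors in `B` and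
every vertex of `B` has at most `d` neighbors in `A`. -/
def IsDCut (G : SimpleGraph V) (d : ℕ) (A B : Set V) : Prop :=
  A.Nonempty ∧ B.Nonempty ∧ Disjoint A B ∧ A ∪ B = Set.univ ∧
    (∀ v ∈ A, (G.neighborSet v ∩ B).ncard ≤ d) ∧
    (∀ v ∈ B, (G.neighborSet v ∩ A).ncard ≤ d)

/-- A vertex set `T` is monochromatic if every `d`-cut of `G` has `T` entirely on one side. -/
def Monochromatic (G : SimpleGraph V) (d : ℕ) (T : Set V) : Prop :=
  ∀ A B : Set V, IsDCut G d A B → T ⊆ A ∨ T ⊆ B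

/-- The edge cut of a cut `(A, B)`: the set of edges of `G` with one endpoint in `A`
and the other endpoint in `B`. -/
def edgeCut (G : SimpleGraph V) (A B : Set V) : Set (Sym2 V) :=
  {e | e ∈ G.edgeSet ∧ ∃ u v, e = s(u, v) ∧ u ∈ A ∧ v ∈ B}

/-- A minimal `d`-cut: no `d`-cut has an edge cut that is a proper subset of its edge cut. -/
def IsMinimalDCut (G : SimpleGraph V) (d : ℕ) (A B : Set V) : Prop :=
  IsDCut G d A B ∧ ∀ A' B' : Set V, IsDCut G d A' B' → ¬ edgeCut G A' B' ⊂ edgeCut G A B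

/-- A maximal `d`-cut: no `d`-cut has an edge cut that properly contains its edge cut. -/
def IsMaximalDCut (G : SimpleGraph V) (d : ℕ) (A B : Set V) : Prop :=
  IsDCut G d A B ∧ ∀ A' B' : Set V, IsDCut G d A' B' → ¬ edgeCut G A B ⊂ edgeCut G A' B'

/-- The graph obtained from `G` by adding all edges between `C` and `D`. -/
def addAllEdges (G : SimpleGraph V) (C D : Set V) : SimpleGraph V :=
  SimpleGraph.fromRel (fun x y => G.Adj x y ∨ (x ∈ C ∧ y ∈ D))

/-!
A clique with at least `2d + 1` vertices cannot be split by a `d`-cut: one side holds at least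
`d + 1` of its vertices, and a clique vertex on the other side would see all of them. So `D`
lies on one side, `u` must follow it (it has more than `d` neighbours in `D`), and `C`, being
`{u}` or another large clique, follows `u`. The same holds in `G₁`, which contains `G`. Once
`C ∪ D` lies on one side `A`, every added edge lies inside `A`, so neither the `d`-cut
condition nor the edge cut can tell `G` and `G₁` apart.
-/

namespace IsDCut

variable {G : SimpleGraph V} {d : ℕ} {A B : Set V}

theorem symm (h : IsDCut G d A B) : IsDCut G d B A :=
  let ⟨hA, hB, hAB, hunion, hAd, hBd⟩ := h
  ⟨hB, hA, hAB.symm, Set.union_comm A B ▸ hunion, hBd, hAd⟩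

theorem mem_right_of_notMem_left (h : IsDCut G d A B) {v : V} (hv : v ∉ A) : v ∈ B :=
  (h.2.2.2.1 ▸ Set.mem_univ v : v ∈ A ∪ B).resolve_left hv

theorem ncard_le_of_subset_neighborSet [Finite V] (h : IsDCut G d A B) {v : V} (hv : v ∈ B)
    {S : Set V} (hSA : S ⊆ A) (hSv : S ⊆ G.neighborSet v) : S.ncard ≤ d :=
  (Set.ncard_le_ncard (Set.subset_inter hSv hSA)).trans (h.2.2.2.2.2 v hv)

theorem subset_or_subset_of_isClique [Finite V] (h : IsDCut G d A B) {K : Set V}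
    (hK : G.IsClique K) (hKsize : 2 * d + 1 ≤ K.ncard) : K ⊆ A ∨ K ⊆ B := by
  by_contra! hsplit
  obtain ⟨⟨a, haK, haA⟩, ⟨b, hbK, hbB⟩⟩ := And.imp Set.not_subset.mp Set.not_subset.mp hsplit
  have hKA : (K ∩ A).ncard ≤ d :=
    h.ncard_le_of_subset_neighborSet (h.mem_right_of_notMem_left haA) Set.inter_subset_right
      fun w ⟨hwK, hwA⟩ => hK haK hwK fun haw => haA (haw ▸ hwA)
  have hKB : (K ∩ B).ncard ≤ d :=
    h.symm.ncard_le_of_subset_neighborSet (h.symm.mem_right_of_notMem_left hbB)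
      Set.inter_subset_right fun w ⟨hwK, hwB⟩ => hK hbK hwK fun hbw => hbB (hbw ▸ hwB)
  have hsplit_card : (K ∩ A).ncard + (K ∩ B).ncard = K.ncard := by
    rw [← Set.ncard_union_eq (h.2.2.1.mono Set.inter_subset_right Set.inter_subset_right),
      ← Set.inter_union_distrib_left, h.2.2.2.1, Set.inter_univ]
  omega

theorem mem_of_lt_ncard_neighborSet_inter [Finite V] (h : IsDCut G d A B) {u : V}
    {S : Set V} (hSA : S ⊆ A) (hu : d < (G.neighborSet u ∩ S).ncard) : u ∈ A := by
  by_contra huA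
  exact hu.not_ge <| h.ncard_le_of_subset_neighborSet (h.mem_right_of_notMem_left huA)
    (Set.inter_subset_right.trans hSA) Set.inter_subset_left

theorem subset_of_isClique_of_mem [Finite V] (h : IsDCut G d A B) {C : Set V}
    (hC : G.IsClique C) (hCsize : C.ncard = 1 ∨ 2 * d + 1 ≤ C.ncard) {u : V} (hu : u ∈ C)
    (huA : u ∈ A) : C ⊆ A := by
  rcases hCsize with hone | hbig
  · obtain ⟨x, rfl⟩ := Set.ncard_eq_one.mp hone
    rwa [Set.singleton_subset_iff, ← Set.mem_singleton_iff.mp hu]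
  · exact (h.subset_or_subset_of_isClique hC hbig).resolve_right
      fun hCB => h.2.2.1.notMem_of_mem_left huA (hCB hu)

end IsDCut

theorem monochromatic_union_of_isClique [Finite V] {G : SimpleGraph V} {d : ℕ} {C D : Set V}
    (hC : G.IsClique C) (hD : G.IsClique D) (hCsize : C.ncard = 1 ∨ 2 * d + 1 ≤ C.ncard)
    (hDsize : 2 * d + 1 ≤ D.ncard) {u : V} (hu : u ∈ C)
    (hud : d < (G.neighborSet u ∩ D).ncard) : Monochromatic G d (C ∪ D) := by
  have side_of_D : ∀ {A B : Set V}, IsDCut G d A B → D ⊆ A → C ∪ D ⊆ A := fun h hDA =>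
    Set.union_subset
      (h.subset_of_isClique_of_mem hC hCsize hu (h.mem_of_lt_ncard_neighborSet_inter hDA hud))
      hDA
  intro A B h
  exact (h.subset_or_subset_of_isClique hD hDsize).imp (side_of_D h) (side_of_D h.symm)

theorem edgeCut_comm (G : SimpleGraph V) (A B : Set V) : edgeCut G A B = edgeCut G B A := by
  ext e
  constructor <;> rintro ⟨he, x, y, rfl, hx, hy⟩ <;> exact ⟨he, y, x, Sym2.eq_swap, hy, hx⟩

theorem Monochromatic.exists_isDCut_disjoint {G : SimpleGraph V} {d : ℕ} {T : Set V}
    (hT : Monochromatic G d T) {A B : Set V} (h : IsDCut G d A B) :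
    ∃ A' B', IsDCut G d A' B' ∧ edgeCut G A' B' = edgeCut G A B ∧ Disjoint B' T := by
  rcases hT A B h with hTA | hTB
  · exact ⟨A, B, h, rfl, h.2.2.1.symm.mono_right hTA⟩
  · exact ⟨B, A, h.symm, edgeCut_comm G B A, h.2.2.1.mono_right hTB⟩

section addAllEdges

variable (G : SimpleGraph V) (C D : Set V)

theorem le_addAllEdges : G ≤ addAllEdges G C D := fun _ _ h =>
  (SimpleGraph.fromRel_adj _ _ _).mpr ⟨h.ne, Or.inl (Or.inl h)⟩

theorem addAllEdges_adj_iff_of_notMem_right {x y : V} (hy : y ∉ C ∪ D) :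
    (addAllEdges G C D).Adj x y ↔ G.Adj x y := by
  simp only [Set.mem_union, not_or] at hy
  simp only [addAllEdges, SimpleGraph.fromRel_adj, hy.1, hy.2, and_false, false_and,
    or_false, G.adj_comm y x, or_self]
  exact and_iff_right_of_imp G.ne_of_adj

theorem addAllEdges_adj_iff_of_notMem_left {x y : V} (hx : x ∉ C ∪ D) :
    (addAllEdges G C D).Adj x y ↔ G.Adj x y := by
  rw [SimpleGraph.adj_comm, addAllEdges_adj_iff_of_notMem_right G C D hx, G.adj_comm]

variable {C D}

theorem isDCut_addAllEdges_iff {d : ℕ} {A B : Set V} (hB : Disjoint B (C ∪ D)) :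
    IsDCut (addAllEdges G C D) d A B ↔ IsDCut G d A B := by
  have inter_B : ∀ v, (addAllEdges G C D).neighborSet v ∩ B = G.neighborSet v ∩ B :=
    fun v => Set.ext fun w => and_congr_left fun hw =>
      addAllEdges_adj_iff_of_notMem_right G C D (hB.notMem_of_mem_left hw)
  have inter_A : ∀ v ∈ B, (addAllEdges G C D).neighborSet v ∩ A = G.neighborSet v ∩ A :=
    fun v hv => Set.ext fun _ => and_congr_left fun _ =>
      addAllEdges_adj_iff_of_notMem_left G C D (hB.notMem_of_mem_left hv)
  simp +contextual only [IsDCut, inter_B, inter_A]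

theorem edgeCut_addAllEdges {A B : Set V} (hB : Disjoint B (C ∪ D)) :
    edgeCut (addAllEdges G C D) A B = edgeCut G A B := by
  ext e
  constructor <;> rintro ⟨he, x, y, rfl, hx, hy⟩ <;> refine ⟨?_, x, y, rfl, hx, hy⟩
  · exact (addAllEdges_adj_iff_of_notMem_right G C D (hB.notMem_of_mem_left hy)).mp he
  · exact (addAllEdges_adj_iff_of_notMem_right G C D (hB.notMem_of_mem_left hy)).mpr he

theorem exists_isDCut_edgeCut_eq_iff_addAllEdges {d : ℕ} (hG : Monochromatic G d (C ∪ D))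
    (hG₁ : Monochromatic (addAllEdges G C D) d (C ∪ D)) (F : Set (Sym2 V)) :
    (∃ A B, IsDCut G d A B ∧ edgeCut G A B = F) ↔
      ∃ A B, IsDCut (addAllEdges G C D) d A B ∧ edgeCut (addAllEdges G C D) A B = F := by
  constructor
  · rintro ⟨A, B, h, rfl⟩
    obtain ⟨A', B', h', hcut, hB'⟩ := hG.exists_isDCut_disjoint h
    exact ⟨A', B', (isDCut_addAllEdges_iff G hB').mpr h', by rw [edgeCut_addAllEdges G hB', hcut]⟩
  · rintro ⟨A, B, h, rfl⟩
    obtain ⟨A', B', h', hcut, hB'⟩ := hG₁.exists_isDCut_disjoint h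
    exact ⟨A', B', (isDCut_addAllEdges_iff G hB').mp h', by rw [← edgeCut_addAllEdges G hB', hcut]⟩

end addAllEdges

theorem merge_cliques_dcut [Fintype V] (G : SimpleGraph V) (d : ℕ)
    (C D : Set V) (hC : G.IsClique C) (hD : G.IsClique D)
    (hCsize : C.ncard = 1 ∨ 2 * d + 1 ≤ C.ncard) (hDsize : 2 * d + 1 ≤ D.ncard)
    (u : V) (hu : u ∈ C) (hud : d < (G.neighborSet u ∩ D).ncard) :
    (∀ A B : Set V, IsDCut G d A B → C ∪ D ⊆ A ∨ C ∪ D ⊆ B) ∧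
    (∀ F : Set (Sym2 V), F ⊆ G.edgeSet →
      ((∃ A B : Set V, IsDCut G d A B ∧ edgeCut G A B = F) ↔
       (∃ A B : Set V, IsDCut (addAllEdges G C D) d A B ∧
          edgeCut (addAllEdges G C D) A B = F))) := by
  have hle := le_addAllEdges G C D
  have hG := monochromatic_union_of_isClique hC hD hCsize hDsize hu hud
  have hud₁ : d < ((addAllEdges G C D).neighborSet u ∩ D).ncard :=
    hud.trans_le <| Set.ncard_le_ncard <|
      Set.inter_subset_inter_left D (SimpleGraph.neighborSet_mono hle u)
  have hG₁ := monochromatic_union_of_isClique (hC.mono hle) (hD.mono hle) hCsize hDsize hu hud₁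
  exact ⟨hG, fun F _ => exists_isDCut_edgeCut_eq_iff_addAllEdges G hG hG₁ F⟩
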